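/- Let p ≥ 0 and l ≥ p + 2 be integers, let Q ∈ Δ^γ_{0,l}, and let B = B(c_B, r_B) be a ball in 𝓑_{2^p} that intersects Q. Then c_B ∈ L_{l−1} ∪ L_l ∪ L_{l+1}. -/
import Mathlib


open MeasureTheory Metric Set

noncomputable section

/-- Euclidean space ℝⁿ. -/
abbrev E (n : ℕ) := EuclideanSpace ℝ (Fin n)

/-- m(x) = min {1, 1/|x|} (with value 1 at x = 0). -/
def mFun {n : ℕ} (x : E n) : ℝ := if ‖x‖ ≤ 1 then 1 else ‖x‖⁻¹

/-- The dyadic cube `2^{-m}(v + [0,1)ⁿ)` of `Δ_m`. -/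
def dyadicCube (n : ℕ) (m : ℤ) (v : Fin n → ℤ) : Set (E n) :=
  {y | ∀ i, y i ∈ Set.Ico ((2 : ℝ) ^ (-m) * v i) ((2 : ℝ) ^ (-m) * (v i + 1))}

/-- The layers `L_0 = [-1,1)ⁿ` and `L_l = [-2^l,2^l)ⁿ \ [-2^{l-1},2^{l-1})ⁿ` for `l ≥ 1`. -/
def layer (n : ℕ) (l : ℕ) : Set (E n) :=
  if l = 0 then {y | ∀ i, y i ∈ Set.Ico (-1 : ℝ) 1}
  else {y | ∀ i, y i ∈ Set.Ico (-(2 : ℝ) ^ l) ((2 : ℝ) ^ l)} \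
       {y | ∀ i, y i ∈ Set.Ico (-(2 : ℝ) ^ (l - 1)) ((2 : ℝ) ^ (l - 1))}

lemma abs_coord_le_norm {n : ℕ} (x : E n) (i : Fin n) : |x i| ≤ ‖x‖ := by
  rw [EuclideanSpace.norm_eq, ← Real.sqrt_sq_eq_abs]
  apply Real.sqrt_le_sqrt
  have := Finset.single_le_sum (f := fun j => ‖x j‖ ^ 2) (fun j _ => sq_nonneg _)
    (Finset.mem_univ i)
  simpa [Real.norm_eq_abs, sq_abs] using this

/-- If `p ≥ 0`, `l ≥ p + 2`, `Q ∈ Δ^γ_{0,l}` and `B = B(c,r) ∈ 𝓑_{2^p}` intersects `Q`,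
then `c ∈ L_{l-1} ∪ L_l ∪ L_{l+1}`. -/
theorem stmt4 (n : ℕ) (hn : 1 ≤ n) (p l : ℕ) (hl : p + 2 ≤ l)
    (v : Fin n → ℤ) (hQ : dyadicCube n l v ⊆ layer n l)
    (c : E n) (r : ℝ) (hr0 : 0 ≤ r) (hr : r ≤ 2 ^ p * mFun c)
    (hint : (ball c r ∩ dyadicCube n l v).Nonempty) :
    c ∈ layer n (l - 1) ∪ layer n l ∪ layer n (l + 1) := by
  obtain ⟨m, rfl⟩ : ∃ m, l = m + 2 := ⟨l - 2, by omega⟩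
  have hpm : p ≤ m := by omega
  obtain ⟨y, hyB, hyQ⟩ := hint
  have hyL := hQ hyQ
  rw [layer] at hyL
  simp only [show m + 2 ≠ 0 by omega, if_false, show m + 2 - 1 = m + 1 from rfl] at hyL
  obtain ⟨hybox, hyout⟩ := hyL
  simp only [Set.mem_diff, Set.mem_setOf_eq, Set.mem_Ico, not_forall, not_and_or,
    not_le, not_lt] at hybox hyout
  obtain ⟨j, hj⟩ := hyout
  -- basic numeric facts
  have h2p : (2:ℝ) ^ p ≤ 2 ^ m := pow_le_pow_right₀ one_le_two hpm
  have h1m : (1:ℝ) ≤ 2 ^ m := one_le_pow₀ one_le_two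
  -- coordinatewise distance bounds
  have hdist : dist y c < r := mem_ball.mp hyB
  have hd : ∀ i, |c i - y i| < r := by
    intro i
    have h1 : |c i - y i| = |(c - y) i| := by simp
    have h2 : |(c - y) i| ≤ ‖c - y‖ := abs_coord_le_norm _ _
    have h3 : ‖c - y‖ = dist y c := by rw [dist_comm, dist_eq_norm]
    linarith [h1 ▸ h2.trans_eq h3]
  -- m(c) ≤ 1 and hence r ≤ 2^p ≤ 2^m
  have hm1 : mFun c ≤ 1 := by
    unfold mFun
    split
    · exact le_refl 1
    · next h => exact inv_le_one_of_one_le₀ (le_of_not_ge h)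
  have hrm : r ≤ 2 ^ m := by
    have : (2:ℝ) ^ p * mFun c ≤ 2 ^ p * 1 := by
      apply mul_le_mul_of_nonneg_left hm1 (by positivity)
    nlinarith
  -- |y j| ≥ 2^(m+1), hence |c j| > 2^m and ‖c‖ > 2^m ≥ 1
  have hcjnorm : |c j| ≤ ‖c‖ := abs_coord_le_norm c j
  have hdj := hd j
  have hcj : 2 ^ m < c j ∨ c j < -(2:ℝ) ^ m := by
    rcases hj with h | h
    · right
      have : c j - y j ≤ |c j - y j| := le_abs_self _
      have hpw : (2:ℝ) ^ (m+1) = 2 * 2 ^ m := by ring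
      nlinarith
    · left
      have : -(c j - y j) ≤ |c j - y j| := neg_le_abs _
      have hpw : (2:ℝ) ^ (m+1) = 2 * 2 ^ m := by ring
      nlinarith
  have hcnorm : 2 ^ m < ‖c‖ := by
    rcases hcj with h | h
    · nlinarith [le_abs_self (c j)]
    · nlinarith [neg_le_abs (c j)]
  -- hence mFun c = ‖c‖⁻¹ and r < 1
  have hr1 : r < 1 := by
    have hne : ¬ ‖c‖ ≤ 1 := by push_neg; linarith
    have hmc : mFun c = ‖c‖⁻¹ := by unfold mFun; rw [if_neg hne]
    rw [hmc] at hr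
    have hcpos : (0:ℝ) < ‖c‖ := by linarith
    have : r * ‖c‖ ≤ 2 ^ p := by
      have := mul_le_mul_of_nonneg_right hr hcpos.le
      rwa [mul_assoc, inv_mul_cancel₀ hcpos.ne', mul_one] at this
    nlinarith
  -- coordinate bounds for c
  have hA : ∀ i, -(2:ℝ) ^ (m+3) ≤ c i ∧ c i < 2 ^ (m+3) := by
    intro i
    obtain ⟨h1, h2⟩ := hybox i
    have ha : c i - y i ≤ |c i - y i| := le_abs_self _
    have hb : -(c i - y i) ≤ |c i - y i| := neg_le_abs _
    have hdi := hd i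
    have hpw : (2:ℝ) ^ (m+3) = 2 * 2 ^ (m+2) := by ring
    have h1m2 : (1:ℝ) ≤ 2 ^ (m+2) := one_le_pow₀ one_le_two
    constructor <;> nlinarith
  -- c j escapes the 2^m box
  have hnotsmall : ¬ ∀ i, c i ∈ Set.Ico (-(2:ℝ) ^ m) ((2:ℝ) ^ m) := by
    intro h
    obtain ⟨h1, h2⟩ := h j
    rcases hcj with h' | h' <;> linarith
  -- conclude by case split
  by_cases h1 : ∀ i, c i ∈ Set.Ico (-(2:ℝ) ^ (m+1)) ((2:ℝ) ^ (m+1))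
  · left; left
    rw [show m + 2 - 1 = m + 1 from rfl, layer, if_neg (by omega : m + 1 ≠ 0)]
    exact ⟨h1, by simpa using hnotsmall⟩
  · by_cases h2 : ∀ i, c i ∈ Set.Ico (-(2:ℝ) ^ (m+2)) ((2:ℝ) ^ (m+2))
    · left; right
      rw [layer, if_neg (by omega : m + 2 ≠ 0)]
      exact ⟨h2, by simpa using h1⟩
    · right
      rw [show m + 2 + 1 = m + 3 from rfl, layer, if_neg (by omega : m + 3 ≠ 0)]
      refine ⟨fun i => Set.mem_Ico.mpr (hA i), by simpa using h2⟩
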